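/- arXiv:0711.3163 — 2 statements merged into one kernel-verified Lean document; each statement's English description precedes it below -/
import Mathlib

section
/- Let M be a DC-weight sequence, let φ : ℝ^n → ℝ be a nonzero linear form, and let f ∈ C^M(ℝ^n) satisfy f(x) = 0 for all x in the kernel of φ. Then there exists a unique function g ∈ C^M(ℝ^n) such that f(x) = φ(x)·g(x) for all x ∈ ℝ^n. -/
open scoped Nat ENNReal
open Matrix

/-- `f` belongs to the Denjoy–Carleman class `C^M` on the open set `U`. -/
def CMClassOn {E F : Type*} [NormedAddCommGroup E] [NormedSpace ℝ E]
    [NormedAddCommGroup F] [NormedSpace ℝ F]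
    (M : ℕ → ℝ) (U : Set E) (f : E → F) : Prop :=
  ContDiffOn ℝ (⊤ : ℕ∞) f U ∧
    ∀ K : Set E, K ⊆ U → IsCompact K →
      ∃ C > (0 : ℝ), ∃ ρ > (0 : ℝ), ∀ k : ℕ, ∀ x ∈ K,
        ‖iteratedFDerivWithin ℝ k f U x‖ ≤ C * ρ ^ k * (k ! : ℝ) * M k

/-- DC-weight sequence: `M 0 = 1`, positive, increasing, logarithmically convex,
and `sup_k (M (k+1) / M k) ^ (1/k) < ∞`. -/
def DCWeightSeq (M : ℕ → ℝ) : Prop :=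
  M 0 = 1 ∧ (∀ k, 0 < M k) ∧ (∀ k, M k ≤ M (k + 1)) ∧
    (∀ k : ℕ, 1 ≤ k → M k ^ 2 ≤ M (k - 1) * M (k + 1)) ∧
    ∃ C : ℝ, ∀ k : ℕ, 1 ≤ k → (M (k + 1) / M k) ^ ((1 : ℝ) / k) ≤ C

/-- Strong regularity: strong non-quasianalyticity together with moderate growth. -/
def StronglyRegular (N : ℕ → ℝ) : Prop :=
  (∃ C > (0 : ℝ), ∀ j : ℕ,
      ∑' k : ℕ, N (j + k) / (((j + k + 1 : ℕ) : ℝ) * N (j + k + 1)) ≤ C * (N j / N (j + 1))) ∧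
    ∃ C : ℝ, ∀ j k : ℕ, 1 ≤ j → 1 ≤ k →
      (N (j + k) / (N j * N k)) ^ ((1 : ℝ) / ((j : ℝ) + (k : ℝ))) ≤ C

section Aux

open intervalIntegral MeasureTheory Set

variable {E F : Type} [NormedAddCommGroup E] [NormedSpace ℝ E] [FiniteDimensional ℝ E]
  [NormedAddCommGroup F] [NormedSpace ℝ F] [CompleteSpace F]

set_option linter.unusedSectionVars false
set_option synthInstance.maxHeartbeats 1000000
set_option maxHeartbeats 1000000

noncomputable def CMaux.psi (Φ : ℝ × E → F) (t : ℝ) (x : E) : E →L[ℝ] F :=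
  (fderiv ℝ Φ (t, x)).comp (ContinuousLinearMap.inr ℝ ℝ E)

namespace CMaux

lemma psi_smooth {Φ : ℝ × E → F} (hΦ : ContDiff ℝ (⊤ : ℕ∞) Φ) :
    ContDiff ℝ (⊤ : ℕ∞) (fun p : ℝ × E => psi Φ p.1 p.2) := by
  exact (hΦ.fderiv_right le_rfl).clm_comp contDiff_const

lemma hasFDerivAt_psi {Φ : ℝ × E → F} (hΦ : ContDiff ℝ (⊤ : ℕ∞) Φ) (t : ℝ) (x : E) :
    HasFDerivAt (fun y => Φ (t, y)) (psi Φ t x) x := by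
  have h1 : HasFDerivAt Φ (fderiv ℝ Φ (t, x)) (t, x) :=
    (hΦ.differentiable (by simp) (t, x)).hasFDerivAt
  have h2 : HasFDerivAt (fun y : E => ((t, y) : ℝ × E))
      (ContinuousLinearMap.inr ℝ ℝ E) x :=
    (hasFDerivAt_const t x).prodMk (hasFDerivAt_id x)
  exact h1.comp x h2

lemma step {Φ : ℝ × E → F} (hΦ : ContDiff ℝ (⊤ : ℕ∞) Φ) (x₀ : E) :
    HasFDerivAt (fun x => ∫ t in (0:ℝ)..1, Φ (t, x)) (∫ t in (0:ℝ)..1, psi Φ t x₀) x₀ := by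
  have hψc : Continuous (fun p : ℝ × E => psi Φ p.1 p.2) := (psi_smooth hΦ).continuous
  obtain ⟨C, hC⟩ : ∃ C, ∀ p ∈ (Icc (0:ℝ) 1 ×ˢ Metric.closedBall x₀ 1),
      ‖psi Φ p.1 p.2‖ ≤ C := by
    rcases (isCompact_Icc.prod (isCompact_closedBall x₀ 1)).exists_bound_of_continuousOn
      (hψc.continuousOn) with ⟨C, hC⟩
    exact ⟨C, hC⟩
  apply intervalIntegral.hasFDerivAt_integral_of_dominated_of_fderiv_le
    (F' := fun x t => psi Φ t x) (bound := fun _ => C) (Metric.ball_mem_nhds x₀ one_pos)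
  · filter_upwards with x
    exact (hΦ.continuous.comp (continuous_id.prodMk continuous_const)).aestronglyMeasurable
  · exact (hΦ.continuous.comp (continuous_id.prodMk continuous_const)).intervalIntegrable 0 1
  · exact (hψc.comp (continuous_id.prodMk continuous_const)).aestronglyMeasurable
  · filter_upwards with t ht x hx
    have ht' : t ∈ Icc (0:ℝ) 1 := by
      rw [Set.uIoc_of_le zero_le_one] at ht
      exact Set.Ioc_subset_Icc_self ht
    exact hC (t, x) ⟨ht', Metric.ball_subset_closedBall hx⟩
  · exact intervalIntegrable_const
  · filter_upwards with t ht x hx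
    exact hasFDerivAt_psi hΦ t x

lemma key (k : ℕ) :
    ∀ (F : Type) (_ : NormedAddCommGroup F), ∀ (_ : NormedSpace ℝ F) (_ : CompleteSpace F),
    ∀ (Φ : ℝ × E → F), ContDiff ℝ (⊤ : ℕ∞) Φ →
    ContDiff ℝ k (fun x => ∫ t in (0:ℝ)..1, Φ (t, x)) ∧
    ∀ (x : E) (B : ℝ),
      (∀ t ∈ Set.uIoc (0:ℝ) 1, ‖iteratedFDeriv ℝ k (fun y => Φ (t, y)) x‖ ≤ B) →
      ‖iteratedFDeriv ℝ k (fun x => ∫ t in (0:ℝ)..1, Φ (t, x)) x‖ ≤ B := by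
  induction k with
  | zero =>
    intro F _ _ _ Φ hΦ
    constructor
    · norm_cast
      rw [contDiff_zero]
      have hd : Differentiable ℝ (fun x => ∫ t in (0:ℝ)..1, Φ (t, x)) :=
        fun x => (step hΦ x).differentiableAt
      exact hd.continuous
    · intro x B hB
      simp only [norm_iteratedFDeriv_zero] at *
      calc ‖∫ t in (0:ℝ)..1, Φ (t, x)‖ ≤ B * |1 - 0| :=
            intervalIntegral.norm_integral_le_of_norm_le_const (fun t ht => hB t ht)
        _ = B := by norm_num
  | succ k IH =>
    intro F _ _ _ Φ hΦ
    have hψ : ContDiff ℝ (⊤ : ℕ∞) (fun p : ℝ × E => psi Φ p.1 p.2) := psi_smooth hΦ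
    have hfd : fderiv ℝ (fun x => ∫ t in (0:ℝ)..1, Φ (t, x))
        = fun x => ∫ t in (0:ℝ)..1, psi Φ t x := funext fun x => (step hΦ x).fderiv
    have hpt : ∀ t x, fderiv ℝ (fun y => Φ (t, y)) x = psi Φ t x :=
      fun t x => (hasFDerivAt_psi hΦ t x).fderiv
    obtain ⟨IH1, IH2⟩ :=
      IH (E →L[ℝ] F) inferInstance inferInstance inferInstance (fun p => psi Φ p.1 p.2) hψ
    constructor
    · push_cast
      rw [contDiff_succ_iff_fderiv]
      refine ⟨fun x => (step hΦ x).differentiableAt, ⟨fun h => absurd h (by simp), ?_⟩⟩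
      rw [hfd]; exact IH1
    · intro x B hB
      rw [← norm_iteratedFDeriv_fderiv, hfd]
      refine IH2 x B (fun t ht => ?_)
      have : (fun y => psi Φ t y) = fderiv ℝ (fun y => Φ (t, y)) :=
        funext fun y => (hpt t y).symm
      rw [this, norm_iteratedFDeriv_fderiv]
      exact hB t ht

end CMaux

end Aux

set_option maxHeartbeats 2000000
set_option synthInstance.maxHeartbeats 1000000

lemma DCWeightSeq.growth {M : ℕ → ℝ} (hM : DCWeightSeq M) :
    ∃ C₁ : ℝ, 1 ≤ C₁ ∧ ∀ k : ℕ, M (k + 1) ≤ C₁ ^ (k + 1) * M k := by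
  obtain ⟨hM0, hMpos, hMmono, -, C₀, hC₀⟩ := hM
  set C₁ := max C₀ (max 1 (M 1)) with hC₁def
  have h1C : (1 : ℝ) ≤ C₁ := le_trans (le_max_left 1 _) (le_max_right _ _)
  refine ⟨C₁, h1C, fun k => ?_⟩
  cases k with
  | zero =>
    have : M 1 ≤ C₁ := le_trans (le_max_right 1 _) (le_max_right _ _)
    simpa [hM0] using this
  | succ k =>
    have hk1 : 1 ≤ k + 1 := Nat.le_add_left 1 k
    have hr : (0 : ℝ) < M (k + 2) / M (k + 1) := div_pos (hMpos _) (hMpos _)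
    have hkey := hC₀ (k + 1) hk1
    have hC₀nn : 0 ≤ C₀ := le_trans (Real.rpow_nonneg hr.le _) hkey
    have hid : M (k + 2) / M (k + 1)
        = ((M (k + 2) / M (k + 1)) ^ ((1 : ℝ) / (k + 1 : ℕ))) ^ (k + 1) := by
      rw [← Real.rpow_natCast ((M (k + 2) / M (k + 1)) ^ ((1 : ℝ) / (k + 1 : ℕ))) (k + 1),
        ← Real.rpow_mul hr.le]
      rw [one_div, inv_mul_cancel₀ (by exact_mod_cast Nat.succ_ne_zero k), Real.rpow_one]
    have hle : M (k + 2) / M (k + 1) ≤ C₀ ^ (k + 1) := by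
      rw [hid]
      exact pow_le_pow_left₀ (Real.rpow_nonneg hr.le _) hkey _
    have : M (k + 2) ≤ C₀ ^ (k + 1) * M (k + 1) := by
      rw [div_le_iff₀ (hMpos (k + 1))] at hle
      exact hle
    refine this.trans ?_
    have hCC : C₀ ^ (k + 1) ≤ C₁ ^ (k + 2) := by
      calc C₀ ^ (k + 1) ≤ C₁ ^ (k + 1) :=
            pow_le_pow_left₀ hC₀nn (le_max_left _ _) _
        _ ≤ C₁ ^ (k + 2) := pow_le_pow_right₀ h1C (by omega)
    exact mul_le_mul_of_nonneg_right hCC (hMpos _).le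

/-- Division by a nonzero linear form in `C^M`: if `f ∈ C^M(ℝⁿ)` vanishes
on the kernel of a nonzero linear form `L`, then there is a unique `g ∈ C^M(ℝⁿ)` with
`f = L · g`. -/
theorem CM_division_by_linear_form
    (n : ℕ) (M : ℕ → ℝ) (hM : DCWeightSeq M)
    (L : (Fin n → ℝ) →ₗ[ℝ] ℝ) (hL : L ≠ 0)
    (f : (Fin n → ℝ) → ℝ) (hf : CMClassOn M Set.univ f)
    (hker : ∀ x : Fin n → ℝ, L x = 0 → f x = 0) :
    ∃! g : (Fin n → ℝ) → ℝ, CMClassOn M Set.univ g ∧ ∀ x, f x = L x * g x := by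
  classical
  obtain ⟨C₁, h1C, hC₁⟩ := hM.growth
  obtain ⟨-, hMpos, -, -, -⟩ := hM
  have hfsm : ContDiff ℝ (⊤ : ℕ∞) f := contDiffOn_univ.mp hf.1
  -- a vector `v` with `L v = 1`
  obtain ⟨u, hu⟩ : ∃ u, L u ≠ 0 := by
    by_contra h
    push_neg at h
    exact hL (LinearMap.ext fun x => by simp [h x])
  set v : Fin n → ℝ := (L u)⁻¹ • u with hv
  have hLv : L v = 1 := by
    rw [hv, _root_.map_smul, smul_eq_mul, inv_mul_cancel₀ hu]
  have hvpos : 0 < ‖v‖ := norm_pos_iff.mpr (fun h => by simp [h] at hLv)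
  set L' : (Fin n → ℝ) →L[ℝ] ℝ := LinearMap.toContinuousLinearMap L with hL'
  set S : (Fin n → ℝ) →L[ℝ] (Fin n → ℝ) := L'.smulRight v with hS
  set ℓ : ℝ → (Fin n → ℝ) →L[ℝ] (Fin n → ℝ) :=
    fun t => ContinuousLinearMap.id ℝ (Fin n → ℝ) + (t - 1) • S with hℓ
  have hℓapp : ∀ t x, ℓ t x = x + (t - 1) • (L x) • v := fun t x => rfl
  set A : ℝ := 1 + ‖L'‖ * ‖v‖ with hA
  have h1A : (1 : ℝ) ≤ A := le_add_of_nonneg_right (by positivity)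
  have hApos : (0 : ℝ) < A := lt_of_lt_of_le one_pos h1A
  have hC₁pos : (0 : ℝ) < C₁ := lt_of_lt_of_le one_pos h1C
  have hAnorm : ∀ t ∈ Set.Icc (0:ℝ) 1, ‖ℓ t‖ ≤ A := by
    intro t ht
    have h1 : ‖(t - 1) • S‖ ≤ |t - 1| * ‖S‖ := by
      simpa using norm_smul_le (t - 1) S
    have h2 : ‖ContinuousLinearMap.id ℝ (Fin n → ℝ)‖ ≤ 1 :=
      ContinuousLinearMap.norm_id_le
    have h3 : |t - 1| ≤ 1 := abs_le.2 ⟨by linarith [ht.1], by linarith [ht.2]⟩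
    have h4 : ‖S‖ = ‖L'‖ * ‖v‖ := by
      rw [hS]; exact ContinuousLinearMap.norm_smulRight_apply _ _
    have h5 : ‖ℓ t‖ ≤ ‖ContinuousLinearMap.id ℝ (Fin n → ℝ)‖ + ‖(t - 1) • S‖ :=
      norm_add_le _ _
    have h6 : (0:ℝ) ≤ ‖S‖ := norm_nonneg _
    rw [hA]
    nlinarith [abs_nonneg (t - 1)]
  set hfun : (Fin n → ℝ) → ℝ := fun u => fderiv ℝ f u v with hhfun
  have hdfsm : ContDiff ℝ (⊤ : ℕ∞) (fderiv ℝ f) := hfsm.fderiv_right le_rfl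
  have hfunsm : ContDiff ℝ (⊤ : ℕ∞) hfun := hdfsm.clm_apply contDiff_const
  set Φ : ℝ × (Fin n → ℝ) → ℝ := fun p => hfun (ℓ p.1 p.2) with hΦdef
  have hℓsm : ContDiff ℝ (⊤ : ℕ∞) (fun p : ℝ × (Fin n → ℝ) => ℓ p.1 p.2) := by
    have : (fun p : ℝ × (Fin n → ℝ) => ℓ p.1 p.2)
        = fun p => p.2 + (p.1 - 1) • S p.2 := rfl
    rw [this]
    exact contDiff_snd.add ((contDiff_fst.sub contDiff_const).smul
      (S.contDiff.comp contDiff_snd))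
  have hΦ : ContDiff ℝ (⊤ : ℕ∞) Φ := hfunsm.comp hℓsm
  set g : (Fin n → ℝ) → ℝ := fun x => ∫ t in (0:ℝ)..1, Φ (t, x) with hgdef
  -- smoothness of g
  have hgsm : ContDiff ℝ (⊤ : ℕ∞) g :=
    contDiff_infty.mpr fun k =>
      (CMaux.key k ℝ inferInstance inferInstance inferInstance Φ hΦ).1
  -- the product identity
  have hprod : ∀ x, f x = L x * g x := by
    intro x
    have hder : ∀ t ∈ Set.uIcc (0:ℝ) 1,
        HasDerivAt (fun s => f (ℓ s x)) (L x * Φ (t, x)) t := by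
      intro t _
      have h1 : HasDerivAt (fun s : ℝ => ℓ s x) ((L x) • v) t := by
        have hid : HasDerivAt (fun s : ℝ => s - 1) 1 t := (hasDerivAt_id t).sub_const 1
        have := (hid.smul_const ((L x) • v)).const_add x
        simpa [hℓapp] using this
      have h2 : HasFDerivAt f (fderiv ℝ f (ℓ t x)) (ℓ t x) :=
        (hfsm.differentiable (by simp) (ℓ t x)).hasFDerivAt
      have h3 := h2.comp_hasDerivAt t h1
      refine h3.congr_deriv ?_
      rw [ContinuousLinearMap.map_smul]
      simp [hΦdef, hhfun, smul_eq_mul]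
    have hcont : IntervalIntegrable (fun t => L x * Φ (t, x)) MeasureTheory.volume 0 1 :=
      (continuous_const.mul
        (hΦ.continuous.comp (continuous_id.prodMk continuous_const))).intervalIntegrable 0 1
    have hFTC := intervalIntegral.integral_eq_sub_of_hasDerivAt hder hcont
    have e1 : ℓ (1:ℝ) x = x := by rw [hℓapp]; simp
    have e0 : f (ℓ (0:ℝ) x) = 0 := by
      apply hker
      rw [hℓapp, map_add, _root_.map_smul, _root_.map_smul, hLv]
      simp
    rw [intervalIntegral.integral_const_mul, e1, e0, sub_zero] at hFTC
    exact hFTC.symm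
  -- the C^M bounds for g
  have hgCM : CMClassOn M Set.univ g := by
    refine ⟨contDiffOn_univ.mpr hgsm, fun K _ hKc => ?_⟩
    have hK2 : IsCompact ((fun p : ℝ × (Fin n → ℝ) => ℓ p.1 p.2) ''
        (Set.Icc (0:ℝ) 1 ×ˢ K)) := (isCompact_Icc.prod hKc).image hℓsm.continuous
    obtain ⟨C, hCpos, ρ, hρpos, hbf⟩ := hf.2 _ (Set.subset_univ _) hK2
    simp only [iteratedFDerivWithin_univ] at hbf
    refine ⟨C * ‖v‖ * ρ * C₁, by positivity, 2 * A * ρ * C₁, by positivity, fun k x hx => ?_⟩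
    rw [iteratedFDerivWithin_univ]
    have hBt : ∀ t ∈ Set.uIoc (0:ℝ) 1, ‖iteratedFDeriv ℝ k (fun y => Φ (t, y)) x‖ ≤
        ‖v‖ * A ^ k * (C * ρ ^ (k + 1) * ((k + 1)! : ℝ) * M (k + 1)) := by
      intro t ht
      have ht' : t ∈ Set.Icc (0:ℝ) 1 := by
        rw [Set.uIoc_of_le zero_le_one] at ht
        exact Set.Ioc_subset_Icc_self ht
      have hmem : ℓ t x ∈ (fun p : ℝ × (Fin n → ℝ) => ℓ p.1 p.2) ''
          (Set.Icc (0:ℝ) 1 ×ˢ K) := ⟨(t, x), ⟨ht', hx⟩, rfl⟩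
      have e2 : (fun y => Φ (t, y)) = hfun ∘ (ℓ t) := rfl
      have e1 := (ℓ t).iteratedFDeriv_comp_right hfunsm x
        (i := k) (by exact_mod_cast le_top)
      rw [e2, e1]
      calc ‖(iteratedFDeriv ℝ k hfun ((ℓ t) x)).compContinuousLinearMap fun _ => ℓ t‖
          ≤ ‖iteratedFDeriv ℝ k hfun (ℓ t x)‖ * ∏ _i : Fin k, ‖ℓ t‖ :=
            ContinuousMultilinearMap.norm_compContinuousLinearMap_le _ _
        _ ≤ (‖v‖ * ‖iteratedFDeriv ℝ k (fderiv ℝ f) (ℓ t x)‖) * A ^ k := by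
            rw [Finset.prod_const, Finset.card_univ, Fintype.card_fin]
            have hc1 : ‖iteratedFDeriv ℝ k hfun (ℓ t x)‖
                ≤ ‖v‖ * ‖iteratedFDeriv ℝ k (fderiv ℝ f) (ℓ t x)‖ :=
              norm_iteratedFDeriv_clm_apply_const hdfsm.contDiffAt (by exact_mod_cast le_top)
            have hc2 : ‖ℓ t‖ ^ k ≤ A ^ k :=
              pow_le_pow_left₀ (norm_nonneg _) (hAnorm t ht') k
            exact mul_le_mul hc1 hc2 (by positivity) (by positivity)
        _ = ‖v‖ * ‖iteratedFDeriv ℝ (k + 1) f (ℓ t x)‖ * A ^ k := by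
            rw [norm_iteratedFDeriv_fderiv]
        _ ≤ ‖v‖ * (C * ρ ^ (k + 1) * ((k + 1)! : ℝ) * M (k + 1)) * A ^ k := by
            have := hbf (k + 1) _ hmem
            have hvnn : (0:ℝ) ≤ ‖v‖ := norm_nonneg _
            have hAk : (0:ℝ) ≤ A ^ k := by positivity
            exact mul_le_mul_of_nonneg_right (mul_le_mul_of_nonneg_left this hvnn) hAk
        _ = ‖v‖ * A ^ k * (C * ρ ^ (k + 1) * ((k + 1)! : ℝ) * M (k + 1)) := by ring
    have hkle := (CMaux.key k ℝ inferInstance inferInstance inferInstance Φ hΦ).2 x _ hBt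
    refine hkle.trans ?_
    have hfac : ((k + 1)! : ℝ) = ((k : ℝ) + 1) * (k ! : ℝ) := by
      rw [Nat.factorial_succ]; push_cast; ring
    have h2k : ((k : ℝ) + 1) ≤ 2 ^ k := by
      have h := Nat.lt_two_pow_self (n := k)
      have h' : (k + 1 : ℕ) ≤ 2 ^ k := h
      exact_mod_cast h'
    have hP : (0:ℝ) ≤ (‖v‖ * C * ρ) * (A ^ k * ρ ^ k) := by positivity
    have hstep : ((k : ℝ) + 1) * (k ! : ℝ) * M (k + 1)
        ≤ ((2:ℝ) ^ k * (k ! : ℝ)) * (C₁ ^ (k + 1) * M k) := by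
      have hfn : (0:ℝ) ≤ (k ! : ℝ) := by positivity
      have := mul_le_mul (mul_le_mul_of_nonneg_right h2k hfn) (hC₁ k)
        (hMpos (k + 1)).le (by positivity)
      exact this
    calc ‖v‖ * A ^ k * (C * ρ ^ (k + 1) * ((k + 1)! : ℝ) * M (k + 1))
        = (‖v‖ * C * ρ) * (A ^ k * ρ ^ k) * (((k : ℝ) + 1) * (k ! : ℝ) * M (k + 1)) := by
          rw [hfac, pow_succ]; ring
      _ ≤ (‖v‖ * C * ρ) * (A ^ k * ρ ^ k)
            * (((2:ℝ) ^ k * (k ! : ℝ)) * (C₁ ^ (k + 1) * M k)) :=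
          mul_le_mul_of_nonneg_left hstep hP
      _ = (C * ‖v‖ * ρ * C₁) * (2 * A * ρ * C₁) ^ k * (k ! : ℝ) * M k := by
          rw [pow_succ, show (2 * A * ρ * C₁) ^ k = 2 ^ k * A ^ k * ρ ^ k * C₁ ^ k by
            rw [mul_pow, mul_pow, mul_pow]]
          ring
  refine ⟨g, ⟨hgCM, hprod⟩, ?_⟩
  rintro g' ⟨hg'CM, hg'⟩
  have hgc : Continuous g := hgsm.continuous
  have hg'c : Continuous g' := (contDiffOn_univ.mp hg'CM.1).continuous
  have hdense : Dense {x : Fin n → ℝ | L x ≠ 0} := by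
    intro x
    rw [mem_closure_iff_seq_limit]
    by_cases hx : L x = 0
    · refine ⟨fun m => x + (1 / ((m : ℝ) + 1)) • v, fun m => ?_, ?_⟩
      · have hLm : L (x + (1 / ((m : ℝ) + 1)) • v) = 1 / ((m : ℝ) + 1) := by
          rw [map_add, _root_.map_smul, hx, hLv]
          simp
        simp only [Set.mem_setOf_eq, hLm]
        positivity
      · have h0 : Filter.Tendsto (fun m : ℕ => (1 / ((m : ℝ) + 1))) Filter.atTop (nhds 0) :=
          tendsto_one_div_add_atTop_nhds_zero_nat
        have := Filter.Tendsto.const_add x ((h0.smul_const v))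
        simpa using this
    · exact ⟨fun _ => x, fun _ => hx, tendsto_const_nhds⟩
  have heq : Set.EqOn g' g {x : Fin n → ℝ | L x ≠ 0} := fun x hx =>
    mul_left_cancel₀ hx (by rw [← hg' x, ← hprod x])
  exact Continuous.ext_on hdense hg'c hgc heq
end

section
/- Let G be a compact topological group with normalized Haar measure dg, acting on ℝ^n via a continuous homomorphism into the orthogonal group O(n). Let M be a DC-weight sequence. If f ∈ C^M(ℝ^n), then the averaged function f̃ defined by f̃(x) = ∫_G f(g·x) dg belongs to C^M(ℝ^n) and is G-invariant. -/
open scoped Nat ENNReal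
open Matrix

open scoped NNReal
open MeasureTheory

section Aux

/-- A continuous function on a compact space is strongly measurable. -/
theorem aux_cont_stronglyMeasurable {α β : Type*} [TopologicalSpace α] [MeasurableSpace α]
    [OpensMeasurableSpace α] [CompactSpace α] [TopologicalSpace β]
    [TopologicalSpace.PseudoMetrizableSpace β] {f : α → β} (hf : Continuous f) :
    StronglyMeasurable f := by
  letI : PseudoMetricSpace β := TopologicalSpace.pseudoMetrizableSpacePseudoMetric β
  letI : MeasurableSpace β := borel β
  haveI : BorelSpace β := ⟨rfl⟩
  rw [stronglyMeasurable_iff_measurable_separable]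
  exact ⟨hf.measurable, (isCompact_range hf).isSeparable⟩

variable {G : Type*} [TopologicalSpace G] [CompactSpace G] [MeasurableSpace G]
  [OpensMeasurableSpace G] {μ : MeasureTheory.Measure G} [IsFiniteMeasure μ]
  {E : Type*} [NormedAddCommGroup E] [NormedSpace ℝ E] [FiniteDimensional ℝ E]

theorem aux_taylor (H : G → E → ℝ) (hH : ∀ g, ContDiff ℝ (⊤ : ℕ∞) (H g))
    (hcont : ∀ k : ℕ, Continuous fun p : G × E => iteratedFDeriv ℝ k (H p.1) p.2) :
    HasFTaylorSeriesUpTo ((⊤ : ℕ∞) : WithTop ℕ∞) (fun x => ∫ g, H g x ∂μ)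
      (fun x k => ∫ g, iteratedFDeriv ℝ k (H g) x ∂μ) := by
  have hint : ∀ (k : ℕ) (x : E), Integrable (fun g => iteratedFDeriv ℝ k (H g) x) μ := by
    intro k x
    exact Continuous.integrable_of_hasCompactSupport
      ((hcont k).comp (continuous_id.prodMk continuous_const))
      (HasCompactSupport.of_compactSpace _)
  have hderiv : ∀ (m : ℕ) (x : E),
      HasFDerivAt (fun y => ∫ g, iteratedFDeriv ℝ m (H g) y ∂μ)
        ((∫ g, iteratedFDeriv ℝ (m + 1) (H g) x ∂μ).curryLeft) x := by
    intro m x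
    have hcomp : IsCompact ((Set.univ : Set G) ×ˢ Metric.closedBall x 1) :=
      isCompact_univ.prod (isCompact_closedBall x 1)
    obtain ⟨C, hC⟩ := hcomp.exists_bound_of_continuousOn (hcont (m + 1)).continuousOn
    have hdiff : ∀ g : G, Differentiable ℝ (iteratedFDeriv ℝ m (H g)) :=
      fun g => (hH g).differentiable_iteratedFDeriv (by exact_mod_cast WithTop.coe_lt_top _)
    have key := hasFDerivAt_integral_of_dominated_of_fderiv_le (μ := μ) (𝕜 := ℝ)
      (F := fun y g => iteratedFDeriv ℝ m (H g) y)
      (F' := fun y g => fderiv ℝ (iteratedFDeriv ℝ m (H g)) y)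
      (x₀ := x) (bound := fun _ => C) (s := Metric.ball x 1) (Metric.ball_mem_nhds x one_pos)
      (Filter.Eventually.of_forall fun y => (aux_cont_stronglyMeasurable
        ((hcont m).comp (continuous_id.prodMk continuous_const))).aestronglyMeasurable)
      (hint m x)
      (by
        have : Continuous fun g => fderiv ℝ (iteratedFDeriv ℝ m (H g)) x := by
          simp only [fderiv_iteratedFDeriv]
          exact (LinearIsometryEquiv.continuous _).comp
            ((hcont (m + 1)).comp (continuous_id.prodMk continuous_const))
        haveI hpm : TopologicalSpace.PseudoMetrizableSpace
            (E →L[ℝ] ContinuousMultilinearMap ℝ (fun _ : Fin m => E) ℝ) :=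
          by exact (PseudoEMetricSpace.pseudoMetrizableSpace
            (α := E →L[ℝ] ContinuousMultilinearMap ℝ (fun _ : Fin m => E) ℝ))
        exact (aux_cont_stronglyMeasurable this).aestronglyMeasurable)
      (Filter.Eventually.of_forall fun g => by
        intro y hy
        simp only [fderiv_iteratedFDeriv, Function.comp_apply]
        rw [LinearIsometryEquiv.norm_map]
        exact hC (g, y) ⟨Set.mem_univ _, Metric.ball_subset_closedBall hy⟩)
      (integrable_const C)
      (Filter.Eventually.of_forall fun g => fun y _ =>
        ((hdiff g) y).hasFDerivAt)
    have heq : (∫ g, fderiv ℝ (iteratedFDeriv ℝ m (H g)) x ∂μ) =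
        (∫ g, iteratedFDeriv ℝ (m + 1) (H g) x ∂μ).curryLeft := by
      simp only [fderiv_iteratedFDeriv, Function.comp_apply]
      have := LinearIsometry.integral_comp_comm (𝕜 := ℝ) (μ := μ)
        (E := ContinuousMultilinearMap ℝ (fun _ : Fin (m + 1) => E) ℝ)
        (F := E →L[ℝ] ContinuousMultilinearMap ℝ (fun _ : Fin m => E) ℝ)
        ((continuousMultilinearCurryLeftEquiv ℝ (fun _ : Fin (m + 1) => E) ℝ).toLinearIsometry)
        (fun g => iteratedFDeriv ℝ (m + 1) (H g) x)
      simp only [LinearIsometryEquiv.coe_toLinearIsometry] at this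
      exact this
    rw [heq] at key
    exact key
  constructor
  · intro x
    have h0 : ∀ g : G, iteratedFDeriv ℝ 0 (H g) x =
        (continuousMultilinearCurryFin0 ℝ E ℝ).symm (H g x) := fun g => by
      rw [iteratedFDeriv_zero_eq_comp]; rfl
    have h0' : (fun g => iteratedFDeriv ℝ 0 (H g) x) =
        fun g => (continuousMultilinearCurryFin0 ℝ E ℝ).symm (H g x) := funext h0
    rw [h0']
    have := LinearIsometry.integral_comp_comm (𝕜 := ℝ) (μ := μ) (E := ℝ)
      (F := ContinuousMultilinearMap ℝ (fun _ : Fin 0 => E) ℝ)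
      ((continuousMultilinearCurryFin0 ℝ E ℝ).symm.toLinearIsometry)
      (fun g => H g x)
    simp only [LinearIsometryEquiv.coe_toLinearIsometry] at this
    rw [this]
    simp
  · intro m _ x
    exact hderiv m x
  · intro m _
    exact continuous_iff_continuousAt.mpr fun x => (hderiv m x).continuousAt

end Aux

/-- Let `G` be a compact topological group with normalized Haar measure,
acting on `ℝⁿ` via a continuous homomorphism into `O(n)`.  If `f ∈ C^M(ℝⁿ)` for a DC-weight
sequence `M`, then the averaged function `x ↦ ∫_G f(g·x) dg` is `G`-invariant and belongs
to `C^M(ℝⁿ)`. -/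
theorem averaging_preserves_CM
    (n : ℕ) (M : ℕ → ℝ) (hM : DCWeightSeq M)
    (G : Type) [Group G] [TopologicalSpace G] [IsTopologicalGroup G] [CompactSpace G]
    [MeasurableSpace G] [BorelSpace G]
    (μ : Measure G) [μ.IsHaarMeasure] [IsProbabilityMeasure μ]
    (ρ : G →* GL (Fin n) ℝ)
    (hρcont : Continuous fun g : G => (ρ g).val)
    (hρorth : ∀ g : G, (ρ g).val * (ρ g).valᵀ = 1)
    (f : (Fin n → ℝ) → ℝ) (hf : CMClassOn M Set.univ f) :
    CMClassOn M Set.univ (fun x : Fin n → ℝ => ∫ g : G, f ((ρ g).val.mulVec x) ∂μ) ∧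
      ∀ g : G, ∀ x : Fin n → ℝ,
        (fun x : Fin n → ℝ => ∫ g' : G, f ((ρ g').val.mulVec x) ∂μ) ((ρ g).val.mulVec x) =
          (fun x : Fin n → ℝ => ∫ g' : G, f ((ρ g').val.mulVec x) ∂μ) x := by
  -- right invariance of the Haar measure on a compact group
  haveI : μ.IsMulRightInvariant := by
    constructor
    intro g
    haveI : IsProbabilityMeasure (Measure.map (· * g) μ) :=
      Measure.isProbabilityMeasure_map (measurable_mul_const g).aemeasurable
    have h1 := Measure.isMulInvariant_eq_smul_of_compactSpace (Measure.map (· * g) μ) μ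
    have h2 : Measure.haarScalarFactor (Measure.map (· * g) μ) μ = 1 := by
      have h3 := congrArg (fun ν : Measure G => ν Set.univ) h1
      simp only [Measure.smul_apply, measure_univ, ENNReal.smul_def, smul_eq_mul,
        mul_one] at h3
      exact_mod_cast h3.symm
    rw [h1, h2, one_smul]
  -- the linear-map version of the action
  set T : Matrix (Fin n) (Fin n) ℝ →ₗ[ℝ] ((Fin n → ℝ) →L[ℝ] (Fin n → ℝ)) :=
    (LinearMap.toContinuousLinearMap.toLinearMap.comp Matrix.toLin'.toLinearMap) with hT
  have hTc : Continuous T := T.continuous_of_finiteDimensional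
  set L : G → ((Fin n → ℝ) →L[ℝ] (Fin n → ℝ)) := fun g => T ((ρ g).val) with hLdef
  have hL : Continuous L := hTc.comp hρcont
  have hLx : ∀ (g : G) (x : Fin n → ℝ), L g x = (ρ g).val.mulVec x := by
    intro g x
    simp [hLdef, hT, Matrix.toLin'_apply]
  set H : G → (Fin n → ℝ) → ℝ := fun g x => f (L g x) with hHdef
  have hfc : ContDiff ℝ (⊤ : ℕ∞) f := contDiffOn_univ.mp hf.1
  have hH : ∀ g, ContDiff ℝ (⊤ : ℕ∞) (H g) := fun g => hfc.comp (L g).contDiff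
  have hHrepr : ∀ (k : ℕ) (g : G) (x : Fin n → ℝ),
      iteratedFDeriv ℝ k (H g) x =
        (iteratedFDeriv ℝ k f (L g x)).compContinuousLinearMap (fun _ => L g) :=
    fun k g x => (L g).iteratedFDeriv_comp_right hfc x (by exact_mod_cast le_top)
  have c1 : Continuous fun p : G × (Fin n → ℝ) => L p.1 p.2 :=
    isBoundedBilinearMap_apply.continuous.comp ((hL.comp continuous_fst).prodMk continuous_snd)
  have hcont : ∀ k : ℕ, Continuous fun p : G × (Fin n → ℝ) => iteratedFDeriv ℝ k (H p.1) p.2 := by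
    intro k
    have c2 : Continuous fun p : G × (Fin n → ℝ) => iteratedFDeriv ℝ k f (L p.1 p.2) :=
      (hfc.continuous_iteratedFDeriv (by exact_mod_cast le_top)).comp c1
    have c3 : Continuous fun p : G × (Fin n → ℝ) =>
        (ContinuousMultilinearMap.compContinuousLinearMapContinuousMultilinear ℝ
          (fun _ : Fin k => (Fin n → ℝ)) (fun _ : Fin k => (Fin n → ℝ)) ℝ)
          (fun _ : Fin k => L p.1) :=
      (ContinuousMultilinearMap.cont _).comp (continuous_pi fun _ => hL.comp continuous_fst)
    have c4 := isBoundedBilinearMap_apply.continuous.comp (c3.prodMk c2)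
    refine c4.congr fun p => ?_
    rw [hHrepr]
    rfl
  have taylor := aux_taylor (μ := μ) H hH hcont
  set F : (Fin n → ℝ) → ℝ := fun x => ∫ g, H g x ∂μ with hFdef
  have hFeq : (fun x : Fin n → ℝ => ∫ g : G, f ((ρ g).val.mulVec x) ∂μ) = F := by
    funext x
    simp only [hFdef, hHdef, hLx]
  have contF : ContDiff ℝ (⊤ : ℕ∞) F := taylor.contDiff
  have hFD : ∀ (k : ℕ) (x : Fin n → ℝ),
      iteratedFDeriv ℝ k F x = ∫ g, iteratedFDeriv ℝ k (H g) x ∂μ := by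
    intro k x
    have := (hasFTaylorSeriesUpToOn_univ_iff.mpr taylor).eq_iteratedFDerivWithin_of_uniqueDiffOn
      (m := k) (by exact_mod_cast le_top) uniqueDiffOn_univ (Set.mem_univ x)
    rw [iteratedFDerivWithin_univ] at this
    exact this.symm
  rw [hFeq]
  constructor
  · constructor
    · exact contDiffOn_univ.mpr contF
    · intro K _ hK
      obtain ⟨C, hC0, ρ₀, hρ₀, hb⟩ := hf.2 ((fun p : G × (Fin n → ℝ) => L p.1 p.2) ''
        ((Set.univ : Set G) ×ˢ K)) (Set.subset_univ _) ((isCompact_univ.prod hK).image c1)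
      simp only [iteratedFDerivWithin_univ] at hb ⊢
      obtain ⟨B₀, hB₀⟩ := isCompact_univ.exists_bound_of_continuousOn hL.continuousOn
      set B := max B₀ 1 with hBdef
      have hB1 : (1 : ℝ) ≤ B := le_max_right _ _
      have hBg : ∀ g, ‖L g‖ ≤ B := fun g => (hB₀ g trivial).trans (le_max_left _ _)
      refine ⟨C, hC0, ρ₀ * B, by positivity, fun k x hx => ?_⟩
      have hMk : 0 ≤ M k := (hM.2.1 k).le
      have step : ∀ g : G, ‖iteratedFDeriv ℝ k (H g) x‖ ≤ C * ρ₀ ^ k * (k ! : ℝ) * M k * B ^ k := by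
        intro g
        rw [hHrepr]
        calc ‖(iteratedFDeriv ℝ k f (L g x)).compContinuousLinearMap (fun _ => L g)‖
            ≤ ‖iteratedFDeriv ℝ k f (L g x)‖ * ∏ _i : Fin k, ‖L g‖ :=
              ContinuousMultilinearMap.norm_compContinuousLinearMap_le _ _
          _ ≤ (C * ρ₀ ^ k * (k ! : ℝ) * M k) * B ^ k := by
              have hmem : L g x ∈ (fun p : G × (Fin n → ℝ) => L p.1 p.2) ''
                  ((Set.univ : Set G) ×ˢ K) := ⟨(g, x), ⟨Set.mem_univ _, hx⟩, rfl⟩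
              have h1 := hb k (L g x) hmem
              have h2 : (∏ _i : Fin k, ‖L g‖) ≤ B ^ k := by
                rw [Finset.prod_const, Finset.card_univ, Fintype.card_fin]
                exact pow_le_pow_left₀ (norm_nonneg _) (hBg g) k
              exact mul_le_mul h1 h2 (Finset.prod_nonneg fun _ _ => norm_nonneg _)
                (by positivity)
      calc ‖iteratedFDeriv ℝ k F x‖ = ‖∫ g, iteratedFDeriv ℝ k (H g) x ∂μ‖ := by rw [hFD]
        _ ≤ (C * ρ₀ ^ k * (k ! : ℝ) * M k * B ^ k) * (μ Set.univ).toReal :=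
            norm_integral_le_of_norm_le_const (Filter.Eventually.of_forall step)
        _ = C * (ρ₀ * B) ^ k * (k ! : ℝ) * M k := by
            rw [measure_univ]
            simp [mul_pow]
            ring
  · intro g x
    show (∫ g' : G, f ((ρ g').val.mulVec ((ρ g).val.mulVec x)) ∂μ) =
      ∫ g' : G, f ((ρ g').val.mulVec x) ∂μ
    have hgg : ∀ g' : G, (ρ g').val.mulVec ((ρ g).val.mulVec x) =
        (ρ (g' * g)).val.mulVec x := by
      intro g'
      rw [Matrix.mulVec_mulVec, ← Units.val_mul, ← _root_.map_mul]
    simp only [hgg]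
    exact integral_mul_right_eq_self (fun h => f ((ρ h).val.mulVec x)) g
end
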